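/- arXiv:2309.14028 — 3 statements merged into one kernel-verified Lean document; each statement's English description precedes it below -/
import Mathlib

section
/- Fix t linearly independent over F_q elements constraint: if (e_1, ..., e_t) is uniform over all t-tuples of F_q-linearly independent elements of F_{q^m}, and (a_1, ..., a_t) is a fixed tuple of elements of F_{q^m}, not all zero, such that NOT all ratios a_j/a_i (for some fixed i with a_i ≠ 0) lie in F_q, then the probability that ∑_{j=1}^t a_j e_j = 0 is at most 1/(q^m − q^{t−1}). -/
/-! Pick `i` with `a i ≠ 0`. On the solutions of `∑ a j * e j = 0` the coordinate `e i` is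
determined by the others, so deleting it is an injection from the solutions into the linearly
independent `(t - 1)`-tuples. There are `q ^ m - q ^ (t - 1)` times fewer of these than linearly
independent `t`-tuples, since a linearly independent `(t - 1)`-tuple extends by any vector outside
its span. -/

open Module

theorem eq_of_sum_mul_eq_zero_of_comp_succAbove_eq {R : Type*} [Ring R] [NoZeroDivisors R]
    {n : ℕ} {a e f : Fin (n + 1) → R} {i : Fin (n + 1)} (hi : a i ≠ 0)
    (he : ∑ j, a j * e j = 0) (hf : ∑ j, a j * f j = 0)
    (h : e ∘ i.succAbove = f ∘ i.succAbove) : e = f := by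
  have hoff : ∀ j ≠ i, e j = f j := fun j hj => by
    obtain ⟨k, rfl⟩ := Fin.exists_succAbove_eq hj
    exact congrFun h k
  have hsum : ∑ j, a j * (e j - f j) = a i * (e i - f i) :=
    Finset.sum_eq_single_of_mem i (Finset.mem_univ i) fun j _ hj => by
      rw [hoff j hj, sub_self, mul_zero]
  have hi' : a i * (e i - f i) = 0 := by
    rw [← hsum]
    simp only [mul_sub, Finset.sum_sub_distrib, he, hf, sub_self]
  funext j
  rcases eq_or_ne j i with rfl | hj
  · exact sub_eq_zero.mp ((mul_eq_zero.mp hi').resolve_left hi)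
  · exact hoff j hj

theorem card_linearIndependent_sum_mul_eq_zero_le {F K : Type*} [Semiring F] [Ring K]
    [NoZeroDivisors K] [Module F K] [Finite K] {n : ℕ} {a : Fin (n + 1) → K} {i : Fin (n + 1)}
    (hi : a i ≠ 0) :
    Nat.card {e : Fin (n + 1) → K // LinearIndependent F e ∧ ∑ j, a j * e j = 0} ≤
      Nat.card {e : Fin n → K // LinearIndependent F e} :=
  Nat.card_le_card_of_injective
    (fun e => ⟨e.1 ∘ i.succAbove, e.2.1.comp _ i.succAbove_right_injective⟩)
    fun e f hef => Subtype.ext <|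
      eq_of_sum_mul_eq_zero_of_comp_succAbove_eq hi e.2.2 f.2.2 (congrArg Subtype.val hef)

section FiniteField

variable {K V : Type*} [DivisionRing K] [Fintype K] [AddCommGroup V] [Module K V] [Finite V]

local notation "q" => Fintype.card K
local notation "m" => Module.finrank K V

theorem card_linearIndependent_pos {n : ℕ} (hn : n ≤ m) :
    0 < Nat.card {e : Fin n → V // LinearIndependent K e} := by
  rw [card_linearIndependent hn]
  exact Finset.prod_pos fun j _ =>
    Nat.sub_pos_of_lt (Nat.pow_lt_pow_right Fintype.one_lt_card (j.2.trans_le hn))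

theorem card_linearIndependent_succ {n : ℕ} (hn : n + 1 ≤ m) :
    Nat.card {e : Fin (n + 1) → V // LinearIndependent K e} =
      Nat.card {e : Fin n → V // LinearIndependent K e} * (q ^ m - q ^ n) := by
  rw [card_linearIndependent hn, card_linearIndependent (n.le_succ.trans hn),
    Fin.prod_univ_castSucc]
  rfl

end FiniteField

theorem stmt_6_general (F K : Type) [Field F] [Fintype F] [Field K] [Fintype K] [Algebra F K]
    (q m t : ℕ) (hq : q = Fintype.card F) (hm : m = Module.finrank F K) (htm : t ≤ m)
    (a : Fin t → K) (ha : a ≠ 0) :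
    (Nat.card {e : Fin t → K // LinearIndependent F e ∧ ∑ j, a j * e j = 0} : ℝ) /
        (Nat.card {e : Fin t → K // LinearIndependent F e} : ℝ) ≤
      1 / ((q : ℝ) ^ m - (q : ℝ) ^ (t - 1)) := by
  subst hq hm
  obtain ⟨i, hi⟩ := Function.ne_iff.mp ha
  obtain ⟨n, rfl⟩ : ∃ n, t = n + 1 := ⟨t - 1, (Nat.succ_pred_eq_of_pos i.pos).symm⟩
  have hsol := card_linearIndependent_sum_mul_eq_zero_le (F := F) hi
  have hM := card_linearIndependent_pos (K := F) (V := K) (n.le_succ.trans htm)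
  have hgap : Fintype.card F ^ n < Fintype.card F ^ finrank F K :=
    Nat.pow_lt_pow_right Fintype.one_lt_card htm
  rw [Nat.add_sub_cancel, card_linearIndependent_succ htm, Nat.cast_mul, Nat.cast_sub hgap.le]
  push_cast
  set M := Nat.card {e : Fin n → K // LinearIndependent F e}
  set d := (Fintype.card F : ℝ) ^ finrank F K - (Fintype.card F : ℝ) ^ n
  have hd : 0 < d := sub_pos.mpr (mod_cast hgap)
  calc _ ≤ (M : ℝ) / (M * d) := by gcongr
    _ = 1 / d := by field_simp

/-- If `(e_1, …, e_t)` is uniform over all `t`-tuples of `F_q`-linearly independent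
elements of `F_{q^m}`, and `(a_1, …, a_t)` is a fixed tuple of elements of `F_{q^m}`,
not all zero, such that there is NO index `i` with `a_i ≠ 0` and scalars `λ_j ∈ F_q` with
`a_j = λ_j a_i` for all `j ≠ i`, then the probability that `∑ a_j e_j = 0` is at most
`1/(q^m − q^{t−1})`. -/
theorem stmt_6 (F K : Type) [Field F] [Fintype F] [Field K] [Fintype K] [Algebra F K]
    (q m t : ℕ) (hq : q = Fintype.card F) (hm : m = Module.finrank F K) (htm : t ≤ m)
    (a : Fin t → K) (ha : a ≠ 0)
    (hdeg : ¬ ∃ i : Fin t, a i ≠ 0 ∧ ∀ j : Fin t, j ≠ i →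
        ∃ lam : F, a j = algebraMap F K lam * a i) :
    (Nat.card {e : Fin t → K // LinearIndependent F e ∧ ∑ j, a j * e j = 0} : ℝ) /
        (Nat.card {e : Fin t → K // LinearIndependent F e} : ℝ) ≤
      1 / ((q : ℝ) ^ m - (q : ℝ) ^ (t - 1)) :=
  stmt_6_general F K q m t hq hm htm a ha
end

section
/- Define T(q, t, w) = 1 − ∏_{i=0}^{tw−1} (1 − q^{i−(n−k)}). If t·w·q^{−(n−k)+tw} ≤ 1, then 0 ≤ q^{−(n−k)+tw}/(q−1) − T(q,t,w) ≤ q^{−(n−k)}/(q−1) + (1/(q+1))·(q^{−(n−k)+tw}/(q−1))². -/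
/-!
With `x i = q ^ i / q ^ (n - k)`, the Weierstrass product inequalities
`1 - ∑ x i ≤ ∏ (1 - x i) ≤ 1 - ∑ x i + ∑_{j < i} x i * x j` trap `T` between `∑ x i` minus the
pair sum and `∑ x i`. The geometric sum `∑ x i` falls short of `q ^ (tw - (n - k)) / (q - 1)` by
exactly `q ^ (-(n - k)) / (q - 1)`, and the pair sum is a double geometric sum, at most
`(q ^ (tw - (n - k)) / (q - 1)) ^ 2 / (q + 1)`.
-/

open Finset

section OrderedRing

variable {R : Type*} [CommRing R] [LinearOrder R] [IsStrictOrderedRing R]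

theorem Finset.one_sub_sum_le_prod_one_sub {ι : Type*} (s : Finset ι) {x : ι → R}
    (hx₀ : ∀ i ∈ s, 0 ≤ x i) (hx₁ : ∀ i ∈ s, x i ≤ 1) :
    1 - ∑ i ∈ s, x i ≤ ∏ i ∈ s, (1 - x i) := by
  induction s using Finset.cons_induction with
  | empty => simp
  | cons a s _ ih =>
    rw [prod_cons, sum_cons]
    have hxa₀ := hx₀ a (mem_cons_self a s)
    have hxa₁ := hx₁ a (mem_cons_self a s)
    have hs₀ : 0 ≤ ∑ i ∈ s, x i := sum_nonneg fun i hi => hx₀ i (mem_cons_of_mem hi)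
    have ih' := ih (fun i hi => hx₀ i (mem_cons_of_mem hi))
      (fun i hi => hx₁ i (mem_cons_of_mem hi))
    calc 1 - (x a + ∑ i ∈ s, x i)
        ≤ (1 - x a) * (1 - ∑ i ∈ s, x i) := by nlinarith
      _ ≤ (1 - x a) * ∏ i ∈ s, (1 - x i) := mul_le_mul_of_nonneg_left ih' (by linarith)

theorem Finset.prod_range_one_sub_le (m : ℕ) {x : ℕ → R}
    (hx₀ : ∀ i < m, 0 ≤ x i) (hx₁ : ∀ i < m, x i ≤ 1) :
    ∏ i ∈ range m, (1 - x i) ≤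
      1 - ∑ i ∈ range m, x i + ∑ i ∈ range m, x i * ∑ j ∈ range i, x j := by
  rw [prod_one_sub_ordered]
  suffices ∑ i ∈ range m, (x i - x i * ∑ j ∈ range i, x j) ≤
      ∑ i ∈ range m, x i * ∏ j ∈ range m with j < i, (1 - x j) by
    rw [sum_sub_distrib] at this; linarith
  refine sum_le_sum fun i hi => ?_
  have hi : i < m := mem_range.mp hi
  have hfilter : {j ∈ range m | j < i} = range i := by
    ext j; simp only [mem_filter, mem_range]; omega
  rw [hfilter, ← mul_one_sub]
  exact mul_le_mul_of_nonneg_left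
    (one_sub_sum_le_prod_one_sub _ (fun j hj => hx₀ j ((mem_range.mp hj).trans hi))
      (fun j hj => hx₁ j ((mem_range.mp hj).trans hi)))
    (hx₀ i hi)

theorem sum_range_pow_mul_geom_sum_le {q : R} (hq : 1 < q) (m : ℕ) :
    (q - 1) ^ 2 * (q + 1) * ∑ i ∈ range m, q ^ i * ∑ j ∈ range i, q ^ j ≤ q ^ (2 * m) := by
  induction m with
  | zero => simp
  | succ m ih =>
    have hgeom : (∑ j ∈ range m, q ^ j) * (q - 1) = q ^ m - 1 := geom_sum_mul q m
    have hqm : 1 ≤ q ^ m := one_le_pow₀ hq.le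
    calc (q - 1) ^ 2 * (q + 1) * ∑ i ∈ range (m + 1), q ^ i * ∑ j ∈ range i, q ^ j
        = (q - 1) ^ 2 * (q + 1) * ∑ i ∈ range m, q ^ i * ∑ j ∈ range i, q ^ j
            + (q ^ 2 - 1) * q ^ m * (q ^ m - 1) := by
          rw [sum_range_succ, ← hgeom]; ring
      _ ≤ q ^ (2 * m) + (q ^ 2 - 1) * q ^ m * (q ^ m - 1) := by gcongr
      _ ≤ q ^ (2 * (m + 1)) := by
          rw [show q ^ (2 * (m + 1)) = q ^ 2 * (q ^ m) ^ 2 by ring,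
            show q ^ (2 * m) = (q ^ m) ^ 2 by ring]
          nlinarith

end OrderedRing

theorem sum_range_pow_div_mul_sum_le {K : Type*} [Field K] [LinearOrder K]
    [IsStrictOrderedRing K] {q c : K} (hq : 1 < q) (hc : 0 < c) (m : ℕ) :
    ∑ i ∈ range m, q ^ i / c * ∑ j ∈ range i, q ^ j / c ≤
      1 / (q + 1) * (q ^ m / c / (q - 1)) ^ 2 := by
  have hq₁ : 0 < q - 1 := sub_pos.mpr hq
  have hD : 0 < (q - 1) ^ 2 * (q + 1) := by positivity
  calc ∑ i ∈ range m, q ^ i / c * ∑ j ∈ range i, q ^ j / c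
      = (∑ i ∈ range m, q ^ i * ∑ j ∈ range i, q ^ j) / c ^ 2 := by
        rw [sum_div]
        refine sum_congr rfl fun i _ => ?_
        rw [← sum_div, div_mul_div_comm, sq]
    _ ≤ q ^ (2 * m) / ((q - 1) ^ 2 * (q + 1)) / c ^ 2 := by
        gcongr
        rw [le_div_iff₀ hD, mul_comm]
        exact sum_range_pow_mul_geom_sum_le hq m
    _ = 1 / (q + 1) * (q ^ m / c / (q - 1)) ^ 2 := by
        field_simp
        ring

theorem stmt_10_general (q : ℝ) (hq : 2 ≤ q) (t w n k : ℕ) (htw : t * w ≤ n - k) :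
    0 ≤ q ^ (t * w) / q ^ (n - k) / (q - 1) -
        (1 - ∏ i ∈ Finset.range (t * w), (1 - q ^ i / q ^ (n - k))) ∧
      q ^ (t * w) / q ^ (n - k) / (q - 1) -
          (1 - ∏ i ∈ Finset.range (t * w), (1 - q ^ i / q ^ (n - k))) ≤
        (1 / q ^ (n - k)) / (q - 1) +
          (1 / (q + 1)) * (q ^ (t * w) / q ^ (n - k) / (q - 1)) ^ 2 := by
  set m := t * w
  set N := n - k
  have hq₁ : (1 : ℝ) < q := by linarith
  have hqN : (0 : ℝ) < q ^ N := by positivity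
  have hx₀ : ∀ i < m, 0 ≤ q ^ i / q ^ N := fun i _ => by positivity
  have hx₁ : ∀ i < m, q ^ i / q ^ N ≤ 1 := fun i hi =>
    (div_le_one hqN).mpr (pow_le_pow_right₀ hq₁.le (hi.le.trans htw))
  have hgap : q ^ m / q ^ N / (q - 1) - ∑ i ∈ range m, q ^ i / q ^ N = 1 / q ^ N / (q - 1) := by
    rw [← sum_div, geom_sum_eq hq₁.ne']
    field_simp
    ring
  have hlower := one_sub_sum_le_prod_one_sub (range m) (fun i hi => hx₀ i (mem_range.mp hi))
    (fun i hi => hx₁ i (mem_range.mp hi))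
  have hupper := prod_range_one_sub_le m hx₀ hx₁
  have herror := sum_range_pow_div_mul_sum_le hq₁ hqN m
  have hgap₀ : 0 ≤ 1 / q ^ N / (q - 1) := by positivity
  constructor <;> linarith

/-- Let `T(q,t,w) = 1 − ∏_{i=0}^{tw−1} (1 − q^{i−(n−k)})`. Under the condition
`t·w·q^{−(n−k)+tw} ≤ 1`, we have
`0 ≤ q^{−(n−k)+tw}/(q−1) − T ≤ q^{−(n−k)}/(q−1) + (1/(q+1))·(q^{−(n−k)+tw}/(q−1))²`. -/
theorem stmt_10 (q : ℝ) (hq : 2 ≤ q) (t w n k : ℕ) (hkn : k < n) (htw : t * w ≤ n - k)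
    (hcond : (t * w : ℝ) * (q ^ (t * w) / q ^ (n - k)) ≤ 1) :
    0 ≤ q ^ (t * w) / q ^ (n - k) / (q - 1) -
        (1 - ∏ i ∈ Finset.range (t * w), (1 - q ^ i / q ^ (n - k))) ∧
      q ^ (t * w) / q ^ (n - k) / (q - 1) -
          (1 - ∏ i ∈ Finset.range (t * w), (1 - q ^ i / q ^ (n - k))) ≤
        (1 / q ^ (n - k)) / (q - 1) +
          (1 / (q + 1)) * (q ^ (t * w) / q ^ (n - k) / (q - 1)) ^ 2 :=
  stmt_10_general q hq t w n k htw
end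

section
/- Expand 1 − ∏_{i=0}^{N−1}(1 − q^{i−s}) = ∑_{i=1}^{N} (−1)^{i+1} u_i where u_i = ∑ over i-element subsets {k_1,...,k_i} of {0,...,N−1} of q^{(k_1+...+k_i) − i·s}. If N·q^{−s+N} ≤ 1 then the sequence (u_i) is decreasing: u_{i+1} ≤ u_i for all 1 ≤ i ≤ N−1. -/
/-!
With `x k = q ^ k / q ^ s`, `u i` is the elementary symmetric function `eᵢ(x)`, and the expansion
is Vieta's formula `∏ (X - xₖ) = ∑ (-1)ʲ eⱼ(x) X^(N-j)` evaluated at `X = 1`.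
For nonnegative variables, `eₙ₊₁ ≤ (∑ xₖ) · eₙ` follows by induction on the number of variables
from `eₙ₊₁(a, x) = eₙ₊₁(x) + a · eₙ(x)`, and the hypothesis gives `∑ xₖ ≤ N q^(N-s) ≤ 1`.
-/

namespace Multiset

variable {R : Type*}

theorem esymm_cons_succ [CommSemiring R] (a : R) (s : Multiset R) (n : ℕ) :
    (a ::ₘ s).esymm (n + 1) = s.esymm (n + 1) + a * s.esymm n := by
  simp [esymm, powersetCard_cons, map_map, sum_map_mul_left]

theorem prod_map_one_sub_eq_sum_esymm [CommRing R] (s : Multiset R) :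
    (s.map (1 - ·)).prod = ∑ j ∈ Finset.range (card s + 1), (-1) ^ j * s.esymm j := by
  simpa [Polynomial.eval_multiset_prod, Polynomial.eval_finsetSum, Function.comp_def]
    using congr_arg (Polynomial.eval 1) (prod_X_sub_X_eq_sum_esymm s)

theorem one_sub_prod_map_one_sub_eq_sum_esymm [CommRing R] (s : Multiset R) :
    1 - (s.map (1 - ·)).prod = ∑ j ∈ Finset.Icc 1 (card s), (-1) ^ (j + 1) * s.esymm j := by
  rw [prod_map_one_sub_eq_sum_esymm, Finset.sum_range_succ', Finset.range_eq_Ico,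
    Finset.sum_Ico_add' (fun j => (-1 : R) ^ j * s.esymm j), Finset.Ico_add_one_right_eq_Icc]
  simp [esymm, pow_succ, Finset.sum_neg_distrib]

section OrderedSemiring

variable [CommSemiring R] [PartialOrder R] [IsOrderedRing R] {s : Multiset R}

theorem esymm_nonneg (hs : ∀ a ∈ s, 0 ≤ a) (n : ℕ) : 0 ≤ s.esymm n :=
  sum_nonneg fun _ hx => by
    obtain ⟨t, ht, rfl⟩ := mem_map.1 hx
    exact prod_nonneg fun a ha => hs a (mem_of_le (mem_powersetCard.1 ht).1 ha)

theorem esymm_le_esymm_cons {a : R} (ha : 0 ≤ a) (hs : ∀ b ∈ s, 0 ≤ b) (n : ℕ) :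
    s.esymm n ≤ (a ::ₘ s).esymm n := by
  cases n with
  | zero => simp [esymm]
  | succ n =>
    rw [esymm_cons_succ]
    exact le_add_of_nonneg_right (mul_nonneg ha (esymm_nonneg hs n))

theorem esymm_succ_le_sum_mul_esymm (hs : ∀ a ∈ s, 0 ≤ a) (n : ℕ) :
    s.esymm (n + 1) ≤ s.sum * s.esymm n := by
  induction s using Multiset.induction_on with
  | empty => simp [esymm, powersetCard_zero_right]
  | cons a s ih =>
    have ha : 0 ≤ a := hs a (mem_cons_self a s)
    have hs' : ∀ b ∈ s, 0 ≤ b := fun b hb => hs b (mem_cons_of_mem hb)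
    calc (a ::ₘ s).esymm (n + 1) = s.esymm (n + 1) + a * s.esymm n := esymm_cons_succ a s n
      _ ≤ s.sum * s.esymm n + a * s.esymm n := by gcongr; exact ih hs'
      _ = (a ::ₘ s).sum * s.esymm n := by rw [sum_cons, add_mul, add_comm]
      _ ≤ (a ::ₘ s).sum * (a ::ₘ s).esymm n :=
        mul_le_mul_of_nonneg_left (esymm_le_esymm_cons ha hs' n) (sum_nonneg hs)

theorem esymm_succ_le_esymm (hs : ∀ a ∈ s, 0 ≤ a) (hsum : s.sum ≤ 1) (n : ℕ) :
    s.esymm (n + 1) ≤ s.esymm n :=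
  (esymm_succ_le_sum_mul_esymm hs n).trans <|
    mul_le_of_le_one_left (esymm_nonneg hs n) hsum

end OrderedSemiring

end Multiset

theorem stmt_11_general (q : ℝ) (hq : 2 ≤ q) (N s : ℕ)
    (u : ℕ → ℝ)
    (hu : ∀ i, u i = ∑ S ∈ (Finset.range N).powersetCard i,
        (∏ kk ∈ S, q ^ kk) / q ^ (i * s))
    (hcond : (N : ℝ) * (q ^ N / q ^ s) ≤ 1) :
    (1 - ∏ i ∈ Finset.range N, (1 - q ^ i / q ^ s)) =
        ∑ i ∈ Finset.Icc 1 N, (-1 : ℝ) ^ (i + 1) * u i ∧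
      ∀ i, 1 ≤ i → i ≤ N - 1 → u (i + 1) ≤ u i := by
  set x : Multiset ℝ := (Finset.range N).val.map fun k => q ^ k / q ^ s
  have hu_esymm : ∀ i, u i = x.esymm i := fun i => by
    rw [hu, Finset.esymm_map_val]
    refine Finset.sum_congr rfl fun S hS => ?_
    rw [Finset.prod_div_distrib, Finset.prod_const, (Finset.mem_powersetCard.1 hS).2, ← pow_mul,
      mul_comm]
  have hx_nonneg : ∀ a ∈ x, 0 ≤ a := by
    simp only [x, Multiset.mem_map]
    rintro _ ⟨k, -, rfl⟩
    positivity
  have hx_sum : x.sum ≤ 1 :=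
    calc x.sum = ∑ k ∈ Finset.range N, q ^ k / q ^ s := rfl
      _ ≤ (Finset.range N).card • (q ^ N / q ^ s) :=
          Finset.sum_le_card_nsmul _ _ _ fun k hk => by
          gcongr
          · linarith
          · exact (Finset.mem_range.1 hk).le
      _ ≤ 1 := by simpa using hcond
  refine ⟨?_, fun i _ _ => ?_⟩
  · have hprod : ∏ k ∈ Finset.range N, (1 - q ^ k / q ^ s) = (x.map (1 - ·)).prod := by
      simp only [x, Finset.prod_eq_multiset_prod, Multiset.map_map, Function.comp_def]
    have hcard : Multiset.card x = N := by simp [x]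
    simp_rw [hprod, x.one_sub_prod_map_one_sub_eq_sum_esymm, hcard, hu_esymm]
  · simpa only [hu_esymm] using Multiset.esymm_succ_le_esymm hx_nonneg hx_sum i

/-- Expansion `1 − ∏_{i=0}^{N−1}(1 − q^{i−s}) = ∑_{i=1}^{N} (−1)^{i+1} u_i` where
`u_i` is the `i`-th elementary symmetric sum of the quantities `q^{k−s}`, `k = 0,…,N−1`;
moreover if `N·q^{−s+N} ≤ 1` then the sequence `(u_i)` is decreasing on `1 ≤ i ≤ N−1`. -/
theorem stmt_11 (q : ℝ) (hq : 2 ≤ q) (N s : ℕ) (hN : 1 ≤ N) (hs : N ≤ s)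
    (u : ℕ → ℝ)
    (hu : ∀ i, u i = ∑ S ∈ (Finset.range N).powersetCard i,
        (∏ kk ∈ S, q ^ kk) / q ^ (i * s))
    (hcond : (N : ℝ) * (q ^ N / q ^ s) ≤ 1) :
    (1 - ∏ i ∈ Finset.range N, (1 - q ^ i / q ^ s)) =
        ∑ i ∈ Finset.Icc 1 N, (-1 : ℝ) ^ (i + 1) * u i ∧
      ∀ i, 1 ≤ i → i ≤ N - 1 → u (i + 1) ≤ u i :=
  stmt_11_general q hq N s u hu hcond
end
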